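/- arXiv:2507.13027 — 2 statements merged into one kernel-verified Lean document; each statement's English description precedes it below -/
import Mathlib

section
/- (L¹-contraction of spherical symmetrization.) Let n ≥ 2 and let u, v : Sⁿ → ℝ be integrable functions on the sphere. Then ∫_{Sⁿ} |u*(x) − v*(x)| dσ(x) ≤ ∫_{Sⁿ} |u(x) − v(x)| dσ(x). -/
open MeasureTheory Set
open scoped ENNReal Pointwise

noncomputable section

/-- The `n`-sphere, realized as the unit sphere in `ℝ^(n+1)`. -/
abbrev Sph (n : ℕ) : Type := Metric.sphere (0 : EuclideanSpace ℝ (Fin (n + 1))) 1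

/-- The surface measure `σ` on the `n`-sphere, induced by the embedding in `ℝ^(n+1)`. -/
def sphMeasure (n : ℕ) : Measure (Sph n) :=
  (volume : Measure (EuclideanSpace ℝ (Fin (n + 1)))).toSphere

/-- The distribution function `μ_u(t) = σ {x | u x > t}`. -/
def distrib (n : ℕ) (u : Sph n → ℝ) (t : ℝ) : ℝ≥0∞ :=
  sphMeasure n {x | t < u x}

/-- The one-dimensional decreasing rearrangement `ū(s) = inf {t | μ_u(t) < s}`. -/
def rearr (n : ℕ) (u : Sph n → ℝ) (s : ℝ) : ℝ :=
  sInf {t : ℝ | distrib n u t < ENNReal.ofReal s}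

/-- The North pole `N = (0, …, 0, 1)` of the `n`-sphere. -/
def northPole (n : ℕ) : Sph n :=
  ⟨EuclideanSpace.single (Fin.last n) 1, by simp⟩

/-- The open geodesic cap about the North pole whose boundary passes through `x`:
`C(x) = {y | ⟨y, N⟩ > ⟨x, N⟩}`. -/
def cap (n : ℕ) (x : Sph n) : Set (Sph n) :=
  {y : Sph n |
    (inner ℝ (x : EuclideanSpace ℝ (Fin (n + 1))) (northPole n : EuclideanSpace ℝ (Fin (n + 1))) : ℝ)
      < inner ℝ (y : EuclideanSpace ℝ (Fin (n + 1))) (northPole n : EuclideanSpace ℝ (Fin (n + 1)))}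

/-- The essential supremum of `u` with respect to the surface measure,
`ess sup u = inf {t | σ(u > t) = 0}`. -/
def sphEssSup (n : ℕ) (u : Sph n → ℝ) : ℝ :=
  sInf {t : ℝ | distrib n u t = 0}

open scoped Classical in
/-- The spherical symmetrization `u*`: `u* x = ū (σ (C x))` for `x ≠ N`, and
`u* N = ess sup u`. -/
def symmzn (n : ℕ) (u : Sph n → ℝ) (x : Sph n) : ℝ :=
  if x = northPole n then sphEssSup n u
  else rearr n u ((sphMeasure n (cap n x)).toReal)

/-! ### Auxiliary development -/

instance sphMeasure_finite (n : ℕ) : IsFiniteMeasure (sphMeasure n) := by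
  unfold sphMeasure; infer_instance

namespace SymmznAux

lemma sq_of_eq (a c t : ℝ) (hnn : 0 ≤ t ^ 2 + c) (h : t = a * Real.sqrt (t ^ 2 + c)) :
    t ^ 2 = a ^ 2 * (t ^ 2 + c) := by
  have := congrArg (· ^ 2) h
  simpa [mul_pow, Real.sq_sqrt hnn] using this

lemma fiber_subsingleton (a c : ℝ) (hc : 0 < c) :
    {t : ℝ | t = a * Real.sqrt (t ^ 2 + c)}.Subsingleton := by
  intro t₁ h₁ t₂ h₂
  simp only [mem_setOf_eq] at h₁ h₂
  have hnn₁ : (0:ℝ) ≤ t₁ ^ 2 + c := by positivity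
  have hnn₂ : (0:ℝ) ≤ t₂ ^ 2 + c := by positivity
  have hsq₁ := sq_of_eq a c t₁ hnn₁ h₁
  have hsq₂ := sq_of_eq a c t₂ hnn₂ h₂
  by_cases ha : a ^ 2 = 1
  · exfalso; rw [ha, one_mul] at hsq₁; nlinarith
  · have h1a : 1 - a ^ 2 ≠ 0 := fun h => ha (by linarith)
    have : t₁ ^ 2 = t₂ ^ 2 := by
      have e1 : t₁ ^ 2 * (1 - a ^ 2) = a ^ 2 * c := by nlinarith
      have e2 : t₂ ^ 2 * (1 - a ^ 2) = a ^ 2 * c := by nlinarith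
      exact mul_right_cancel₀ h1a (e1.trans e2.symm)
    rw [h₁, h₂, this]

lemma pi_cone_null (n : ℕ) (hn : 1 ≤ n) (a : ℝ) :
    (volume : Measure (Fin (n + 1) → ℝ))
      {f | f (Fin.last n) = a * Real.sqrt (∑ i, f i ^ 2)} = 0 := by
  have : Nonempty (Fin n) := ⟨⟨0, hn⟩⟩
  set e := MeasurableEquiv.piFinSuccAbove (fun _ : Fin (n+1) => ℝ) (Fin.last n) with he
  have hpres := volume_preserving_piFinSuccAbove (fun _ : Fin (n+1) => ℝ) (Fin.last n)
  set W : Set (ℝ × (Fin n → ℝ)) :=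
    {p | p.1 = a * Real.sqrt (p.1 ^ 2 + ∑ j, p.2 j ^ 2)} with hW
  have hWm : MeasurableSet W := by
    have : Measurable fun p : ℝ × (Fin n → ℝ) =>
        p.1 - a * Real.sqrt (p.1 ^ 2 + ∑ j, p.2 j ^ 2) := by
      apply Measurable.sub measurable_fst
      apply Measurable.const_mul
      apply Real.continuous_sqrt.measurable.comp
      apply Measurable.add (measurable_fst.pow_const 2)
      exact Finset.measurable_sum _ fun j _ =>
        ((measurable_pi_apply j).comp measurable_snd).pow_const 2
    have h2 := this (measurableSet_singleton 0)
    convert h2 using 1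
    ext p; simp [hW, sub_eq_zero]
  have hset : {f : Fin (n+1) → ℝ | f (Fin.last n) = a * Real.sqrt (∑ i, f i ^ 2)}
      = e ⁻¹' W := by
    ext f
    have hsum : ∑ i, f i ^ 2 = f (Fin.last n) ^ 2 + ∑ j, f ((Fin.last n).succAbove j) ^ 2 :=
      Fin.sum_univ_succAbove (fun i => f i ^ 2) (Fin.last n)
    simp [hW, he, MeasurableEquiv.piFinSuccAbove, hsum, Fin.insertNthEquiv, Fin.init]
  rw [hset, hpres.measure_preimage hWm.nullMeasurableSet]
  have hswap := MeasureTheory.Measure.measurePreserving_swap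
    (μ := (volume : Measure (Fin n → ℝ))) (ν := (volume : Measure ℝ))
  rw [Measure.volume_eq_prod, ← hswap.measure_preimage hWm.nullMeasurableSet]
  have hWsm : MeasurableSet (Prod.swap ⁻¹' W) := hWm.preimage measurable_swap
  rw [Measure.measure_prod_null hWsm]
  have hz : ∀ᵐ z : (Fin n → ℝ) ∂volume, (0:ℝ) < ∑ j, z j ^ 2 := by
    have h0 : (volume : Measure (Fin n → ℝ)) {z | ¬ (0:ℝ) < ∑ j, z j ^ 2} = 0 := by
      have hsub : {z : Fin n → ℝ | ¬ (0:ℝ) < ∑ j, z j ^ 2} ⊆ {0} := by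
        intro z hz
        simp only [Set.mem_setOf_eq, not_lt] at hz
        have hnn : (0:ℝ) ≤ ∑ j, z j ^ 2 := Finset.sum_nonneg fun j _ => sq_nonneg _
        have hzero : ∑ j, z j ^ 2 = 0 := le_antisymm hz hnn
        have hall : ∀ j ∈ Finset.univ, z j ^ 2 = 0 :=
          (Finset.sum_eq_zero_iff_of_nonneg fun j _ => sq_nonneg _).1 hzero
        have : z = 0 := funext fun j => pow_eq_zero_iff (n := 2) (by norm_num) |>.1
          (hall j (Finset.mem_univ j))
        simp [this]
      exact measure_mono_null hsub (measure_singleton _)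
    exact h0
  filter_upwards [hz] with z hz
  have hfib : (Prod.mk z ⁻¹' (Prod.swap ⁻¹' W))
      = {t : ℝ | t = a * Real.sqrt (t ^ 2 + ∑ j, z j ^ 2)} := by
    ext t; simp [hW, Prod.swap]
  simp only [Pi.zero_apply]
  rw [hfib]
  exact Set.Countable.measure_zero (fiber_subsingleton a _ hz).countable _

lemma euclidean_cone_null (n : ℕ) (hn : 1 ≤ n) (a : ℝ) :
    (volume : Measure (EuclideanSpace ℝ (Fin (n + 1))))
      {y | y (Fin.last n) = a * ‖y‖} = 0 := by
  have hpres := EuclideanSpace.volume_preserving_symm_measurableEquiv_toLp (Fin (n + 1))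
  have hset : {y : EuclideanSpace ℝ (Fin (n + 1)) | y (Fin.last n) = a * ‖y‖}
      = (MeasurableEquiv.toLp 2 (Fin (n + 1) → ℝ)).symm ⁻¹'
        {f : Fin (n + 1) → ℝ | f (Fin.last n) = a * Real.sqrt (∑ i, f i ^ 2)} := by
    ext y
    simp [EuclideanSpace.norm_eq]
  rw [hset, hpres.measure_preimage]
  · exact pi_cone_null n hn a
  · apply MeasurableSet.nullMeasurableSet
    have hme : Measurable fun f : Fin (n+1) → ℝ =>
        f (Fin.last n) - a * Real.sqrt (∑ i, f i ^ 2) := by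
      apply Measurable.sub (measurable_pi_apply _)
      exact (Real.continuous_sqrt.measurable.comp
        (Finset.measurable_sum _ fun i _ => (measurable_pi_apply i).pow_const 2)).const_mul a
    have h2 := hme (measurableSet_singleton 0)
    convert h2 using 1
    ext f; simp [sub_eq_zero]

variable {n : ℕ}

/-- The height function. -/
def hgt (n : ℕ) (x : Sph n) : ℝ :=
  inner ℝ (x : EuclideanSpace ℝ (Fin (n + 1))) (northPole n : EuclideanSpace ℝ (Fin (n + 1)))

lemma cap_eq (x : Sph n) : cap n x = {y | hgt n x < hgt n y} := rfl

lemma hgt_eq_coord (x : Sph n) :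
    hgt n x = (x : EuclideanSpace ℝ (Fin (n + 1))) (Fin.last n) := by
  simp [hgt, northPole, EuclideanSpace.inner_single_right]

lemma norm_coe_eq_one (x : Sph n) : ‖(x : EuclideanSpace ℝ (Fin (n + 1)))‖ = 1 :=
  mem_sphere_zero_iff_norm.mp x.2

lemma abs_hgt_le_one (x : Sph n) : |hgt n x| ≤ 1 := by
  have := abs_real_inner_le_norm (x : EuclideanSpace ℝ (Fin (n + 1)))
    (northPole n : EuclideanSpace ℝ (Fin (n + 1)))
  rwa [norm_coe_eq_one, norm_coe_eq_one, mul_one] at this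

lemma neg_one_le_hgt (x : Sph n) : -1 ≤ hgt n x := neg_le_of_abs_le (abs_hgt_le_one x)
lemma hgt_le_one (x : Sph n) : hgt n x ≤ 1 := le_of_abs_le (abs_hgt_le_one x)

lemma measurable_hgt : Measurable (hgt n) := by
  have : Continuous (hgt n) := by
    apply Continuous.inner (continuous_subtype_val) (continuous_const)
  exact this.measurable

lemma hgt_slice_null (hn : 1 ≤ n) (a : ℝ) : sphMeasure n {x : Sph n | hgt n x = a} = 0 := by
  have hm : MeasurableSet {x : Sph n | hgt n x = a} :=
    measurable_hgt (measurableSet_singleton a)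
  rw [sphMeasure, Measure.toSphere_apply' _ hm]
  have hz : (Ioo (0:ℝ) 1 • ((↑) '' {x : Sph n | hgt n x = a}))
      ⊆ {y : EuclideanSpace ℝ (Fin (n + 1)) | y (Fin.last n) = a * ‖y‖} := by
    rintro y ⟨r, hr, y', ⟨x, hx, rfl⟩, rfl⟩
    have hx1 := norm_coe_eq_one x
    simp only [mem_setOf_eq] at hx ⊢
    rw [hgt_eq_coord] at hx
    rw [norm_smul, hx1]
    simp [PiLp.smul_apply, hx, Real.norm_eq_abs, abs_of_pos hr.1]
    ring
  rw [measure_mono_null hz (euclidean_cone_null n hn a)]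
  simp

/-- measure of the open cap above height `a`. -/
def capG (n : ℕ) (a : ℝ) : ℝ≥0∞ := sphMeasure n {x | a < hgt n x}

lemma capm_eq (x : Sph n) : sphMeasure n (cap n x) = capG n (hgt n x) := rfl

lemma capG_anti : Antitone (capG n) := fun a b hab =>
  measure_mono fun x hx => lt_of_le_of_lt hab hx

lemma measurableSet_hgt_lt (a : ℝ) : MeasurableSet {x : Sph n | a < hgt n x} :=
  measurableSet_lt measurable_const measurable_hgt

lemma measurableSet_hgt_le (a : ℝ) : MeasurableSet {x : Sph n | a ≤ hgt n x} :=
  measurableSet_le measurable_const measurable_hgt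

lemma measure_hgt_ge (hn : 1 ≤ n) (a : ℝ) :
    sphMeasure n {x | a ≤ hgt n x} = capG n a := by
  apply le_antisymm
  · have hsub : {x : Sph n | a ≤ hgt n x} ⊆ {x | a < hgt n x} ∪ {x | hgt n x = a} := by
      intro x hx
      simp only [mem_setOf_eq, mem_union] at hx ⊢
      rcases lt_or_eq_of_le hx with h | h
      · exact Or.inl h
      · exact Or.inr h.symm
    calc sphMeasure n {x | a ≤ hgt n x} ≤ _ := measure_mono hsub
      _ ≤ sphMeasure n {x | a < hgt n x} + sphMeasure n {x | hgt n x = a} := measure_union_le _ _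
      _ = capG n a := by rw [hgt_slice_null hn a, add_zero]; rfl
  · exact measure_mono fun x (hx : a < hgt n x) => le_of_lt hx

lemma capG_le_total (a : ℝ) : capG n a ≤ sphMeasure n univ := measure_mono (subset_univ _)

lemma capG_total_of_lt (a : ℝ) (ha : a < -1) : capG n a = sphMeasure n univ := by
  have : {x : Sph n | a < hgt n x} = univ :=
    eq_univ_of_forall fun x => lt_of_lt_of_le ha (neg_one_le_hgt x)
  rw [capG, this]

lemma capG_right_cont (a : ℝ) : capG n a = ⨆ k : ℕ, capG n (a + (1 : ℝ) / (k + 1)) := by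
  have hmono : Monotone fun k : ℕ => {x : Sph n | a + (1:ℝ)/(k+1) < hgt n x} := by
    intro k l hkl x hx
    simp only [mem_setOf_eq] at hx ⊢
    have h1 : (1:ℝ)/(l+1) ≤ 1/(k+1) := by
      apply one_div_le_one_div_of_le (by positivity)
      exact_mod_cast add_le_add_left (Nat.cast_le.mpr hkl) 1
    linarith
  have hun : {x : Sph n | a < hgt n x} = ⋃ k : ℕ, {x : Sph n | a + (1:ℝ)/(k+1) < hgt n x} := by
    ext x
    simp only [mem_setOf_eq, mem_iUnion]
    constructor
    · intro hx
      obtain ⟨k, hk⟩ := exists_nat_one_div_lt (sub_pos.mpr hx)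
      exact ⟨k, by linarith⟩
    · rintro ⟨k, hk⟩
      have : (0:ℝ) < 1/(k+1) := by positivity
      linarith
  rw [capG, hun, hmono.measure_iUnion]
  rfl

/-- The key intermediate-value lemma: every value `c ≤ σ(univ)` is the measure of a cap,
and the sublevel set of the cap-measure function is the corresponding closed cap. -/
lemma exists_level (hn : 1 ≤ n) (c : ℝ≥0∞) (hc : c ≤ sphMeasure n univ) :
    ∃ a : ℝ, capG n a = c ∧ {x : Sph n | capG n (hgt n x) ≤ c} = {x | a ≤ hgt n x} := by
  rcases eq_or_lt_of_le hc with hceq | hclt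
  · refine ⟨-2, by rw [capG_total_of_lt _ (by norm_num), hceq], ?_⟩
    apply Subset.antisymm
    · intro x _; exact le_trans (by norm_num) (neg_one_le_hgt x)
    · intro x _; exact le_of_le_of_eq (capG_le_total _) hceq.symm
  · set S : Set ℝ := {a | capG n a ≤ c} with hS
    have hSne : S.Nonempty := by
      refine ⟨1, ?_⟩
      have : {x : Sph n | 1 < hgt n x} = ∅ := by
        apply eq_empty_of_forall_notMem
        intro x hx
        exact absurd (hgt_le_one x) (not_le.mpr hx)
      simp only [hS, mem_setOf_eq, capG, this, measure_empty]
      exact zero_le'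
    have hSbdd : BddBelow S := by
      refine ⟨-1, fun a ha => ?_⟩
      by_contra hlt
      push_neg at hlt
      rw [mem_setOf_eq, capG_total_of_lt a hlt] at ha
      exact absurd (lt_of_le_of_lt ha hclt) (lt_irrefl _)
    set a₀ := sInf S with ha₀
    have hgtmem : ∀ b, a₀ < b → capG n b ≤ c := by
      intro b hb
      obtain ⟨a, haS, hab⟩ := exists_lt_of_csInf_lt hSne hb
      exact le_trans (capG_anti hab.le) haS
    have hltmem : ∀ b, b < a₀ → c < capG n b := by
      intro b hb
      by_contra hle
      push_neg at hle
      exact absurd (csInf_le hSbdd hle) (not_le.mpr hb)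
    have hle : capG n a₀ ≤ c := by
      rw [capG_right_cont a₀]
      apply iSup_le
      intro k
      refine hgtmem _ ?_
      have : (0:ℝ) < 1/(k+1) := by positivity
      linarith
    have hge : c ≤ sphMeasure n {x | a₀ ≤ hgt n x} := by
      have hint : {x : Sph n | a₀ ≤ hgt n x}
          = ⋂ k : ℕ, {x : Sph n | a₀ - (1:ℝ)/(k+1) < hgt n x} := by
        ext x
        simp only [mem_setOf_eq, mem_iInter]
        constructor
        · intro hx k
          have : (0:ℝ) < 1/(k+1) := by positivity
          linarith
        · intro hx
          by_contra hlt
          push_neg at hlt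
          obtain ⟨k, hk⟩ := exists_nat_one_div_lt (sub_pos.mpr hlt)
          have := hx k
          linarith
      have hanti : Antitone fun k : ℕ => {x : Sph n | a₀ - (1:ℝ)/(k+1) < hgt n x} := by
        intro k l hkl x hx
        simp only [mem_setOf_eq] at hx ⊢
        have h1 : (1:ℝ)/(l+1) ≤ 1/(k+1) := by
          apply one_div_le_one_div_of_le (by positivity)
          exact_mod_cast add_le_add_left (Nat.cast_le.mpr hkl) 1
        linarith
      rw [hint, hanti.measure_iInter
        (fun k => (measurableSet_hgt_lt _).nullMeasurableSet)
        ⟨0, measure_ne_top _ _⟩]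
      apply le_iInf
      intro k
      have : a₀ - (1:ℝ)/(k+1) < a₀ := by
        have : (0:ℝ) < 1/(k+1) := by positivity
        linarith
      exact (hltmem _ this).le
    rw [measure_hgt_ge hn] at hge
    have heq : capG n a₀ = c := le_antisymm hle hge
    refine ⟨a₀, heq, ?_⟩
    ext x
    simp only [mem_setOf_eq]
    constructor
    · intro hx
      by_contra hlt
      push_neg at hlt
      exact absurd hx (not_le.mpr (hltmem _ hlt))
    · intro hx
      calc capG n (hgt n x) ≤ capG n a₀ := capG_anti hx
        _ = c := heq


/-! ### Measure of sublevel sets of the cap-measure function -/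

lemma capm_le_total (x : Sph n) : sphMeasure n (cap n x) ≤ sphMeasure n univ :=
  measure_mono (subset_univ _)

lemma measurableSet_capm_le (hn : 1 ≤ n) (c : ℝ≥0∞) :
    MeasurableSet {x : Sph n | sphMeasure n (cap n x) ≤ c} := by
  by_cases hc : c ≤ sphMeasure n univ
  · obtain ⟨a, _, hset⟩ := exists_level hn c hc
    have : {x : Sph n | sphMeasure n (cap n x) ≤ c} = {x | a ≤ hgt n x} := by
      simp only [capm_eq]; exact hset
    rw [this]; exact measurableSet_hgt_le a
  · have : {x : Sph n | sphMeasure n (cap n x) ≤ c} = univ :=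
      eq_univ_of_forall fun x => le_trans (capm_le_total x) (le_of_lt (not_le.mp hc))
    rw [this]; exact MeasurableSet.univ

lemma measure_capm_le (hn : 1 ≤ n) (c : ℝ≥0∞) :
    sphMeasure n {x : Sph n | sphMeasure n (cap n x) ≤ c} = min c (sphMeasure n univ) := by
  by_cases hc : c ≤ sphMeasure n univ
  · obtain ⟨a, ha, hset⟩ := exists_level hn c hc
    have hs2 : {x : Sph n | sphMeasure n (cap n x) ≤ c} = {x | a ≤ hgt n x} := by
      simp only [capm_eq]; exact hset
    rw [hs2, measure_hgt_ge hn, ha, min_eq_left hc]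
  · have : {x : Sph n | sphMeasure n (cap n x) ≤ c} = univ :=
      eq_univ_of_forall fun x => le_trans (capm_le_total x) (le_of_lt (not_le.mp hc))
    rw [this, min_eq_right (le_of_lt (not_le.mp hc))]

lemma measurableSet_capm_lt (hn : 1 ≤ n) (c : ℝ≥0∞) :
    MeasurableSet {x : Sph n | sphMeasure n (cap n x) < c} := by
  have hun : {x : Sph n | sphMeasure n (cap n x) < c}
      = ⋃ q : ℚ, {x : Sph n | sphMeasure n (cap n x) ≤ Real.toNNReal q
          ∧ (Real.toNNReal q : ℝ≥0∞) < c} := by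
    ext x
    simp only [mem_setOf_eq, mem_iUnion]
    constructor
    · intro hx
      obtain ⟨q, _, h1, h2⟩ := ENNReal.lt_iff_exists_rat_btwn.1 hx
      exact ⟨q, h1.le, h2⟩
    · rintro ⟨q, h1, h2⟩
      exact lt_of_le_of_lt h1 h2
  rw [hun]
  apply MeasurableSet.iUnion
  intro q
  by_cases hq : (Real.toNNReal q : ℝ≥0∞) < c
  · have : {x : Sph n | sphMeasure n (cap n x) ≤ Real.toNNReal q
        ∧ (Real.toNNReal q : ℝ≥0∞) < c}
        = {x : Sph n | sphMeasure n (cap n x) ≤ Real.toNNReal q} := by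
      ext x; simp [hq]
    rw [this]; exact measurableSet_capm_le hn _
  · have : {x : Sph n | sphMeasure n (cap n x) ≤ Real.toNNReal q
        ∧ (Real.toNNReal q : ℝ≥0∞) < c} = ∅ := by
      ext x; simp [hq]
    rw [this]; exact MeasurableSet.empty

lemma iInf_inv_nat_eq_zero : ⨅ k : ℕ, ((k : ℝ≥0∞))⁻¹ = 0 := by
  by_contra h
  obtain ⟨k, hk⟩ := ENNReal.exists_inv_nat_lt h
  exact absurd (iInf_le _ k) (not_le.mpr hk)

lemma measure_capm_lt (hn : 1 ≤ n) (c : ℝ≥0∞) :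
    sphMeasure n {x : Sph n | sphMeasure n (cap n x) < c} = min c (sphMeasure n univ) := by
  rcases eq_or_ne c 0 with rfl | hc0
  · simp
  rcases eq_or_ne c ⊤ with rfl | hctop
  · have : {x : Sph n | sphMeasure n (cap n x) < ⊤} = univ :=
      eq_univ_of_forall fun x => lt_of_le_of_lt (capm_le_total x) (measure_lt_top _ _)
    rw [this, min_eq_right le_top]
  -- now 0 < c < ⊤
  have hun : {x : Sph n | sphMeasure n (cap n x) < c}
      = ⋃ k : ℕ, {x : Sph n | sphMeasure n (cap n x) ≤ c - ((k : ℝ≥0∞))⁻¹} := by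
    ext x
    simp only [mem_setOf_eq, mem_iUnion]
    constructor
    · intro hx
      have hpos : c - sphMeasure n (cap n x) ≠ 0 := by
        simpa [tsub_eq_zero_iff_le] using not_le.mpr hx
      obtain ⟨k, hk⟩ := ENNReal.exists_inv_nat_lt hpos
      refine ⟨k, ?_⟩
      have h2 : ((k:ℝ≥0∞))⁻¹ + sphMeasure n (cap n x) < c := lt_tsub_iff_right.mp hk
      exact le_of_lt (lt_tsub_iff_left.mpr h2)
    · rintro ⟨k, hk⟩
      refine lt_of_le_of_lt hk ?_
      apply ENNReal.sub_lt_self hctop hc0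
      simp
  rw [hun]
  have hmono : Monotone fun k : ℕ =>
      {x : Sph n | sphMeasure n (cap n x) ≤ c - ((k : ℝ≥0∞))⁻¹} := by
    intro k l hkl x hx
    refine le_trans hx (tsub_le_tsub_left ?_ c)
    exact ENNReal.inv_le_inv.mpr (by exact_mod_cast hkl)
  rw [hmono.measure_iUnion]
  have hval : ∀ k : ℕ, sphMeasure n {x : Sph n | sphMeasure n (cap n x) ≤ c - ((k : ℝ≥0∞))⁻¹}
      = min (c - ((k : ℝ≥0∞))⁻¹) (sphMeasure n univ) := fun k => measure_capm_le hn _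
  simp only [hval]
  apply le_antisymm
  · apply iSup_le
    intro k
    exact min_le_min (tsub_le_self) le_rfl
  · rcases le_total c (sphMeasure n univ) with hcT | hTc
    · rw [min_eq_left hcT]
      have hsup : ⨆ k : ℕ, (c - ((k : ℝ≥0∞))⁻¹) = c := by
        rw [← ENNReal.sub_iInf, iInf_inv_nat_eq_zero, tsub_zero]
      calc c = ⨆ k : ℕ, (c - ((k : ℝ≥0∞))⁻¹) := hsup.symm
        _ ≤ ⨆ k : ℕ, min (c - ((k : ℝ≥0∞))⁻¹) (sphMeasure n univ) := by
            apply iSup_mono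
            intro k
            exact le_min le_rfl (le_trans tsub_le_self hcT)
    · rw [min_eq_right hTc]
      rcases eq_or_lt_of_le hTc with hEq | hlt
      · -- c = T
        have hsup : ⨆ k : ℕ, (c - ((k : ℝ≥0∞))⁻¹) = c := by
          rw [← ENNReal.sub_iInf, iInf_inv_nat_eq_zero, tsub_zero]
        calc sphMeasure n univ = c := hEq
          _ = ⨆ k : ℕ, (c - ((k : ℝ≥0∞))⁻¹) := hsup.symm
          _ ≤ ⨆ k : ℕ, min (c - ((k : ℝ≥0∞))⁻¹) (sphMeasure n univ) := by
              apply iSup_mono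
              intro k
              exact le_min le_rfl (le_trans tsub_le_self (le_of_eq hEq.symm))
      · -- T < c : pick k with k⁻¹ < c - T
        have hd : c - sphMeasure n univ ≠ 0 := by
          simpa [tsub_eq_zero_iff_le] using not_le.mpr hlt
        obtain ⟨k, hk⟩ := ENNReal.exists_inv_nat_lt hd
        have hTle : sphMeasure n univ ≤ c - ((k:ℝ≥0∞))⁻¹ := by
          have h2 : ((k:ℝ≥0∞))⁻¹ + sphMeasure n univ < c := lt_tsub_iff_right.mp hk
          exact le_of_lt (lt_tsub_iff_left.mpr h2)
        refine le_trans ?_ (le_iSup _ k)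
        rw [min_eq_right hTle]


/-! ### Distribution function lemmas -/

variable {u : Sph n → ℝ}

lemma distrib_anti (u : Sph n → ℝ) : Antitone (distrib n u) := fun a b hab =>
  measure_mono fun x hx => lt_of_le_of_lt hab hx

lemma distrib_le_total (u : Sph n → ℝ) (t : ℝ) : distrib n u t ≤ sphMeasure n univ :=
  measure_mono (subset_univ _)

lemma distrib_congr (hu : AEMeasurable u (sphMeasure n)) (t : ℝ) :
    distrib n u t = sphMeasure n {x | t < hu.mk u x} := by
  apply measure_congr
  filter_upwards [hu.ae_eq_mk] with x hx
  change (t < u x) = (t < AEMeasurable.mk u hu x)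
  rw [hx]

/-- The set `B u t` of cap-measure values which are below the supremum of
`distrib` just to the right of `t`. -/
def Bset (n : ℕ) (u : Sph n → ℝ) (t : ℝ) : Set ℝ≥0∞ :=
  {c | ∃ t' > t, c ≤ distrib n u t'}

lemma Bset_lower (t : ℝ) {c c' : ℝ≥0∞} (hc : c ∈ Bset n u t) (h : c' ≤ c) :
    c' ∈ Bset n u t := by
  obtain ⟨t', ht', hle⟩ := hc
  exact ⟨t', ht', le_trans h hle⟩

lemma sSup_Bset (hu : AEMeasurable u (sphMeasure n)) (t : ℝ) :
    sSup (Bset n u t) = distrib n u t := by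
  apply le_antisymm
  · apply sSup_le
    rintro c ⟨t', ht', hle⟩
    exact le_trans hle (distrib_anti u (le_of_lt ht'))
  · -- right continuity
    have hun : {x : Sph n | t < hu.mk u x}
        = ⋃ k : ℕ, {x : Sph n | t + (1:ℝ)/(k+1) < hu.mk u x} := by
      ext x
      simp only [mem_setOf_eq, mem_iUnion]
      constructor
      · intro hx
        obtain ⟨k, hk⟩ := exists_nat_one_div_lt (sub_pos.mpr hx)
        exact ⟨k, by linarith⟩
      · rintro ⟨k, hk⟩
        have : (0:ℝ) < 1/(k+1) := by positivity
        linarith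
    have hmono : Monotone fun k : ℕ => {x : Sph n | t + (1:ℝ)/(k+1) < hu.mk u x} := by
      intro k l hkl x hx
      simp only [mem_setOf_eq] at hx ⊢
      have h1 : (1:ℝ)/(l+1) ≤ 1/(k+1) := by
        apply one_div_le_one_div_of_le (by positivity)
        exact_mod_cast add_le_add_left (Nat.cast_le.mpr hkl) 1
      linarith
    rw [distrib_congr hu, hun, hmono.measure_iUnion]
    apply iSup_le
    intro k
    apply le_sSup
    refine ⟨t + (1:ℝ)/(k+1), by
      have : (0:ℝ) < 1/(k+1) := by positivity
      linarith, ?_⟩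
    rw [distrib_congr hu]

lemma mem_Bset_le_distrib {t : ℝ} {c : ℝ≥0∞} (hc : c ∈ Bset n u t) : c ≤ distrib n u t := by
  obtain ⟨t', ht', hle⟩ := hc
  exact le_trans hle (distrib_anti u (le_of_lt ht'))

lemma lt_of_lt_sSup_Bset (hu : AEMeasurable u (sphMeasure n)) {t : ℝ} {c : ℝ≥0∞}
    (hc : c < distrib n u t) : c ∈ Bset n u t := by
  rw [← sSup_Bset hu] at hc
  obtain ⟨b, hb, hcb⟩ := lt_sSup_iff.mp hc
  exact Bset_lower t hb (le_of_lt hcb)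

lemma distrib_exists_lt (hu : AEMeasurable u (sphMeasure n)) {c : ℝ≥0∞} (hc : c ≠ 0) :
    ∃ t : ℝ, distrib n u t < c := by
  have hint : (⋂ k : ℕ, {x : Sph n | (k : ℝ) < hu.mk u x}) = ∅ := by
    apply eq_empty_of_forall_notMem
    intro x hx
    simp only [mem_iInter, mem_setOf_eq] at hx
    obtain ⟨k, hk⟩ := exists_nat_gt (hu.mk u x)
    exact absurd (hx k) (not_lt.mpr hk.le)
  have hanti : Antitone fun k : ℕ => {x : Sph n | (k : ℝ) < hu.mk u x} := by
    intro k l hkl x hx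
    simp only [mem_setOf_eq] at hx ⊢
    exact lt_of_le_of_lt (by exact_mod_cast hkl) hx
  have hmeas : ∀ k : ℕ, NullMeasurableSet {x : Sph n | (k : ℝ) < hu.mk u x} (sphMeasure n) :=
    fun k => (measurableSet_lt measurable_const hu.measurable_mk).nullMeasurableSet
  have h0 : (⨅ k : ℕ, sphMeasure n {x : Sph n | (k : ℝ) < hu.mk u x}) = 0 := by
    rw [← hanti.measure_iInter hmeas ⟨0, measure_ne_top _ _⟩, hint, measure_empty]
  have hlt : (⨅ k : ℕ, sphMeasure n {x : Sph n | (k : ℝ) < hu.mk u x}) < c := by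
    rw [h0]; exact pos_iff_ne_zero.mpr hc
  obtain ⟨k, hk⟩ := iInf_lt_iff.mp hlt
  exact ⟨k, by rwa [distrib_congr hu]⟩

lemma distrib_exists_gt (hu : AEMeasurable u (sphMeasure n)) {c : ℝ≥0∞}
    (hc : c < sphMeasure n univ) : ∃ t : ℝ, c < distrib n u t := by
  have hun : (⋃ k : ℕ, {x : Sph n | -(k : ℝ) < hu.mk u x}) = univ := by
    apply eq_univ_of_forall
    intro x
    simp only [mem_iUnion, mem_setOf_eq]
    obtain ⟨k, hk⟩ := exists_nat_gt (-(hu.mk u x))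
    exact ⟨k, by linarith⟩
  have hmono : Monotone fun k : ℕ => {x : Sph n | -(k : ℝ) < hu.mk u x} := by
    intro k l hkl x hx
    simp only [mem_setOf_eq] at hx ⊢
    have : (k:ℝ) ≤ l := by exact_mod_cast hkl
    linarith
  have hT : (⨆ k : ℕ, sphMeasure n {x : Sph n | -(k : ℝ) < hu.mk u x}) = sphMeasure n univ := by
    rw [← hmono.measure_iUnion, hun]
  have hlt : c < ⨆ k : ℕ, sphMeasure n {x : Sph n | -(k : ℝ) < hu.mk u x} := by rw [hT]; exact hc
  obtain ⟨k, hk⟩ := lt_iSup_iff.mp hlt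
  exact ⟨-(k:ℝ), by rwa [distrib_congr hu]⟩

/-! ### The rearrangement inequality characterization -/

lemma lt_rearr_iff (hu : AEMeasurable u (sphMeasure n)) {t s' : ℝ}
    (h1 : 0 < ENNReal.ofReal s') (h2 : ENNReal.ofReal s' < sphMeasure n univ) :
    t < rearr n u s' ↔ ∃ t' > t, ENNReal.ofReal s' ≤ distrib n u t' := by
  set A : Set ℝ := {r | distrib n u r < ENNReal.ofReal s'} with hA
  have hAne : A.Nonempty := distrib_exists_lt hu (ne_of_gt h1)
  have hAbdd : BddBelow A := by
    obtain ⟨r₀, hr₀⟩ := distrib_exists_gt hu h2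
    refine ⟨r₀, fun r hr => ?_⟩
    by_contra hlt
    push_neg at hlt
    have : ENNReal.ofReal s' < distrib n u r :=
      lt_of_lt_of_le hr₀ (distrib_anti u hlt.le)
    exact absurd (lt_trans this hr) (lt_irrefl _)
  constructor
  · intro ht
    refine ⟨(t + rearr n u s') / 2, by simp only [gt_iff_lt]; linarith, ?_⟩
    by_contra hlt
    push_neg at hlt
    have hmem : (t + rearr n u s') / 2 ∈ A := hlt
    have hle2 : rearr n u s' ≤ (t + rearr n u s') / 2 := csInf_le hAbdd hmem
    linarith
  · rintro ⟨t', ht', hle⟩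
    have hlb : ∀ r ∈ A, t' ≤ r := by
      intro r hr
      by_contra hlt
      push_neg at hlt
      have : ENNReal.ofReal s' ≤ distrib n u r := le_trans hle (distrib_anti u hlt.le)
      exact absurd hr (not_lt.mpr this)
    have h3 : t' ≤ sInf A := le_csInf hAne hlb
    exact lt_of_lt_of_le ht' h3


/-! ### The bad null set and the measurable representative of `symmzn` -/

def Zbad (n : ℕ) : Set (Sph n) :=
  {northPole n} ∪ {x | sphMeasure n (cap n x) ≤ 0}
    ∪ {x | sphMeasure n (cap n x) < sphMeasure n univ}ᶜ

lemma measurableSet_Zbad (hn : 1 ≤ n) : MeasurableSet (Zbad n) :=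
  (((measurableSet_singleton _).union (measurableSet_capm_le hn 0)).union
    (measurableSet_capm_lt hn _).compl)

lemma hgt_northPole : hgt n (northPole n) = 1 := by
  have := norm_coe_eq_one (northPole n)
  have h2 : hgt n (northPole n)
      = ‖(northPole n : EuclideanSpace ℝ (Fin (n + 1)))‖ ^ 2 := by
    rw [hgt, real_inner_self_eq_norm_sq]
  rw [h2, this, one_pow]

lemma northPole_null (hn : 1 ≤ n) : sphMeasure n {northPole n} = 0 := by
  apply measure_mono_null (t := {x : Sph n | hgt n x = 1})
  · intro x hx
    simp only [mem_singleton_iff] at hx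
    subst hx
    exact hgt_northPole
  · exact hgt_slice_null hn 1

lemma Zbad_null (hn : 1 ≤ n) : sphMeasure n (Zbad n) = 0 := by
  have h1 := northPole_null hn
  have h2 : sphMeasure n {x : Sph n | sphMeasure n (cap n x) ≤ 0} = 0 := by
    rw [measure_capm_le hn 0]; simp
  have h3 : sphMeasure n {x : Sph n | sphMeasure n (cap n x) < sphMeasure n univ}ᶜ = 0 := by
    rw [measure_compl (measurableSet_capm_lt hn _) (measure_ne_top _ _),
      measure_capm_lt hn _, min_self, tsub_self]
  rw [Zbad]
  exact measure_union_null (measure_union_null h1 h2) h3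

lemma symmzn_lt_iff {u : Sph n → ℝ} (hu : AEMeasurable u (sphMeasure n)) {t : ℝ} {x : Sph n}
    (hx : x ∉ Zbad n) :
    t < symmzn n u x ↔ sphMeasure n (cap n x) ∈ Bset n u t := by
  have hxN : x ≠ northPole n := fun h => hx (Or.inl (Or.inl h))
  have hx0 : ¬ sphMeasure n (cap n x) ≤ 0 := fun h => hx (Or.inl (Or.inr h))
  have hxT : sphMeasure n (cap n x) < sphMeasure n univ := by
    by_contra h
    exact hx (Or.inr h)
  have hne : sphMeasure n (cap n x) ≠ ⊤ := measure_ne_top _ _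
  have hofReal : ENNReal.ofReal ((sphMeasure n (cap n x)).toReal) = sphMeasure n (cap n x) :=
    ENNReal.ofReal_toReal hne
  rw [symmzn, if_neg hxN]
  rw [lt_rearr_iff hu (by rw [hofReal]; exact pos_iff_ne_zero.mpr (fun h => hx0 (le_of_eq h)))
    (by rw [hofReal]; exact hxT)]
  simp only [Bset, mem_setOf_eq, hofReal]

open scoped Classical in
/-- A measurable representative of `symmzn n u`. -/
def wrep (n : ℕ) (u : Sph n → ℝ) : Sph n → ℝ :=
  fun x => if x ∈ Zbad n then 0 else symmzn n u x

lemma wrep_ae_eq (hn : 1 ≤ n) (u : Sph n → ℝ) :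
    wrep n u =ᵐ[sphMeasure n] symmzn n u := by
  have hsub : {x : Sph n | ¬ wrep n u x = symmzn n u x} ⊆ Zbad n := by
    intro x hx
    by_contra hz
    exact hx (by rw [wrep, if_neg hz])
  exact measure_mono_null hsub (Zbad_null hn)

lemma measurableSet_BsetLevel (hn : 1 ≤ n) (u : Sph n → ℝ) (t : ℝ) :
    MeasurableSet {x : Sph n | sphMeasure n (cap n x) ∈ Bset n u t} := by
  have hun : {x : Sph n | sphMeasure n (cap n x) ∈ Bset n u t}
      = ⋃ q : {q : ℚ // t < (q : ℝ)},
          {x : Sph n | sphMeasure n (cap n x) ≤ distrib n u (q : ℝ)} := by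
    ext x
    simp only [mem_setOf_eq, mem_iUnion]
    constructor
    · rintro ⟨t', ht', hle⟩
      obtain ⟨q, hq1, hq2⟩ := exists_rat_btwn ht'
      exact ⟨⟨q, hq1⟩, le_trans hle (distrib_anti u hq2.le)⟩
    · rintro ⟨⟨q, hq⟩, hle⟩
      exact ⟨(q : ℝ), hq, hle⟩
  rw [hun]
  exact MeasurableSet.iUnion fun q => measurableSet_capm_le hn _

lemma measurable_wrep (hn : 1 ≤ n) {u : Sph n → ℝ} (hu : AEMeasurable u (sphMeasure n)) :
    Measurable (wrep n u) := by
  apply measurable_of_Ioi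
  intro t
  have hset : wrep n u ⁻¹' (Ioi t)
      = ((Zbad n)ᶜ ∩ {x : Sph n | sphMeasure n (cap n x) ∈ Bset n u t})
        ∪ ((Zbad n) ∩ {x : Sph n | t < 0}) := by
    ext x
    simp only [mem_preimage, mem_Ioi, mem_union, mem_inter_iff, mem_compl_iff, mem_setOf_eq]
    by_cases hz : x ∈ Zbad n
    · simp only [wrep, if_pos hz, hz]
      tauto
    · simp only [wrep, if_neg hz, hz]
      rw [← symmzn_lt_iff hu hz]
      tauto
  rw [hset]
  apply MeasurableSet.union
  · exact (measurableSet_Zbad hn).compl.inter (measurableSet_BsetLevel hn u t)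
  · apply (measurableSet_Zbad hn).inter
    by_cases ht : t < 0
    · have : {x : Sph n | t < 0} = univ := eq_univ_of_forall fun x => ht
      rw [this]; exact MeasurableSet.univ
    · have : {x : Sph n | t < 0} = ∅ := eq_empty_of_forall_notMem fun x => ht
      rw [this]; exact MeasurableSet.empty

/-! ### The one-sided per-level bound -/

lemma onesided (hn : 1 ≤ n) {u v : Sph n → ℝ} (hu : AEMeasurable u (sphMeasure n))
    (hv : AEMeasurable v (sphMeasure n)) (t : ℝ) :
    sphMeasure n {x : Sph n | t < wrep n u x ∧ ¬ t < wrep n v x}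
      ≤ distrib n u t - distrib n v t := by
  set mu := distrib n u t with hmu
  set mv := distrib n v t with hmv
  have hsub : {x : Sph n | t < wrep n u x ∧ ¬ t < wrep n v x}
      ⊆ ({x : Sph n | sphMeasure n (cap n x) ≤ mu}
          \ {x : Sph n | sphMeasure n (cap n x) < mv}) ∪ Zbad n := by
    rintro x ⟨h1, h2⟩
    by_cases hz : x ∈ Zbad n
    · exact Or.inr hz
    · left
      rw [wrep, if_neg hz] at h1 h2
      rw [symmzn_lt_iff hu hz] at h1
      rw [symmzn_lt_iff hv hz] at h2
      refine ⟨mem_Bset_le_distrib h1, ?_⟩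
      intro hlt
      exact h2 (lt_of_lt_sSup_Bset hv hlt)
  have hdiff : sphMeasure n ({x : Sph n | sphMeasure n (cap n x) ≤ mu}
      \ {x : Sph n | sphMeasure n (cap n x) < mv}) ≤ mu - mv := by
    rcases le_total mv mu with hvu | huv
    · have hss : {x : Sph n | sphMeasure n (cap n x) < mv}
          ⊆ {x : Sph n | sphMeasure n (cap n x) ≤ mu} :=
        fun x hx => le_trans (le_of_lt hx) hvu
      rw [measure_diff hss (measurableSet_capm_lt hn mv).nullMeasurableSet (measure_ne_top _ _),
        measure_capm_le hn, measure_capm_lt hn,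
        min_eq_left (distrib_le_total u t), min_eq_left (distrib_le_total v t)]
    · have hsub2 : {x : Sph n | sphMeasure n (cap n x) ≤ mu}
          \ {x : Sph n | sphMeasure n (cap n x) < mv}
          ⊆ {x : Sph n | sphMeasure n (cap n x) ≤ mu}
            \ {x : Sph n | sphMeasure n (cap n x) < mu} := by
        rintro x ⟨hx1, hx2⟩
        exact ⟨hx1, fun hlt => hx2 (lt_of_lt_of_le hlt huv)⟩
      have hzero : sphMeasure n ({x : Sph n | sphMeasure n (cap n x) ≤ mu}
          \ {x : Sph n | sphMeasure n (cap n x) < mu}) = 0 := by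
        have hss0 : {x : Sph n | sphMeasure n (cap n x) < mu}
            ⊆ {x : Sph n | sphMeasure n (cap n x) ≤ mu} :=
          fun x (hx : sphMeasure n (cap n x) < mu) => (le_of_lt hx : sphMeasure n (cap n x) ≤ mu)
        rw [measure_diff hss0
          (measurableSet_capm_lt hn mu).nullMeasurableSet (measure_ne_top _ _),
          measure_capm_le hn, measure_capm_lt hn, tsub_self]
      calc sphMeasure n _ ≤ _ := measure_mono hsub2
        _ = 0 := hzero
        _ ≤ mu - mv := zero_le'
  calc sphMeasure n {x : Sph n | t < wrep n u x ∧ ¬ t < wrep n v x}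
      ≤ sphMeasure n (({x : Sph n | sphMeasure n (cap n x) ≤ mu}
          \ {x : Sph n | sphMeasure n (cap n x) < mv}) ∪ Zbad n) := measure_mono hsub
    _ ≤ sphMeasure n ({x : Sph n | sphMeasure n (cap n x) ≤ mu}
          \ {x : Sph n | sphMeasure n (cap n x) < mv}) + sphMeasure n (Zbad n) :=
        measure_union_le _ _
    _ = sphMeasure n ({x : Sph n | sphMeasure n (cap n x) ≤ mu}
          \ {x : Sph n | sphMeasure n (cap n x) < mv}) := by rw [Zbad_null hn, add_zero]
    _ ≤ mu - mv := hdiff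


/-! ### Layer cake -/

lemma xor_interval (a b : ℝ) :
    {t : ℝ | (t < a) ≠ (t < b)} = Ico (min a b) (max a b) := by
  ext t
  simp only [mem_setOf_eq, ne_eq, eq_iff_iff, not_iff, mem_Ico]
  constructor
  · intro h
    rcases le_or_gt a t with h1 | h1
    · have hb : t < b := (h.mp (not_lt.mpr h1))
      exact ⟨le_trans (min_le_left a b) h1, lt_of_lt_of_le hb (le_max_right a b)⟩
    · have hnb : ¬ t < b := fun hb => (h.mpr hb) h1
      exact ⟨le_trans (min_le_right a b) (not_lt.mp hnb),
        lt_of_lt_of_le h1 (le_max_left a b)⟩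
  · rintro ⟨hmin, hmax⟩
    constructor
    · intro hna
      by_contra hnb
      exact absurd (max_le (not_lt.mp hna) (not_lt.mp hnb)) (not_le.mpr hmax)
    · intro hb ha
      exact absurd (lt_min ha hb) (not_lt.mpr hmin)

lemma volume_xor (a b : ℝ) :
    volume {t : ℝ | (t < a) ≠ (t < b)} = ENNReal.ofReal |a - b| := by
  rw [xor_interval, Real.volume_Ico, max_sub_min_eq_abs, abs_sub_comm]

lemma lintegral_abs_eq {φ ψ : Sph n → ℝ} (hφ : Measurable φ) (hψ : Measurable ψ) :
    ∫⁻ x, ENNReal.ofReal |φ x - ψ x| ∂(sphMeasure n)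
      = ∫⁻ t, sphMeasure n {x | (t < φ x) ≠ (t < ψ x)} ∂(volume : Measure ℝ) := by
  set D : Set (Sph n × ℝ) := {p | (p.2 < φ p.1) ≠ (p.2 < ψ p.1)} with hD
  have hA : MeasurableSet {p : Sph n × ℝ | p.2 < φ p.1} :=
    measurableSet_lt measurable_snd (hφ.comp measurable_fst)
  have hB : MeasurableSet {p : Sph n × ℝ | p.2 < ψ p.1} :=
    measurableSet_lt measurable_snd (hψ.comp measurable_fst)
  have hDm : MeasurableSet D := by
    have : D = ({p : Sph n × ℝ | p.2 < φ p.1} \ {p | p.2 < ψ p.1})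
        ∪ ({p | p.2 < ψ p.1} \ {p | p.2 < φ p.1}) := by
      ext p
      simp only [hD, mem_setOf_eq, ne_eq, eq_iff_iff, mem_union, mem_diff, mem_setOf_eq]
      tauto
    rw [this]
    exact (hA.diff hB).union (hB.diff hA)
  calc ∫⁻ x, ENNReal.ofReal |φ x - ψ x| ∂(sphMeasure n)
      = ∫⁻ x, volume (Prod.mk x ⁻¹' D) ∂(sphMeasure n) := by
        apply lintegral_congr
        intro x
        have : (Prod.mk x ⁻¹' D) = {t : ℝ | (t < φ x) ≠ (t < ψ x)} := rfl
        rw [this, volume_xor]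
    _ = ((sphMeasure n).prod volume) D := (Measure.prod_apply hDm).symm
    _ = ∫⁻ t, sphMeasure n ((fun x => (x, t)) ⁻¹' D) ∂(volume : Measure ℝ) :=
        Measure.prod_apply_symm hDm
    _ = ∫⁻ t, sphMeasure n {x | (t < φ x) ≠ (t < ψ x)} ∂(volume : Measure ℝ) := by
        apply lintegral_congr
        intro t
        rfl

/-! ### The main lintegral inequality -/

lemma main_lintegral (hn : 1 ≤ n) {u v : Sph n → ℝ} (hu : AEMeasurable u (sphMeasure n))
    (hv : AEMeasurable v (sphMeasure n)) :
    ∫⁻ x, ENNReal.ofReal |wrep n u x - wrep n v x| ∂(sphMeasure n)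
      ≤ ∫⁻ x, ENNReal.ofReal |hu.mk u x - hv.mk v x| ∂(sphMeasure n) := by
  rw [lintegral_abs_eq (measurable_wrep hn hu) (measurable_wrep hn hv),
    lintegral_abs_eq hu.measurable_mk hv.measurable_mk]
  apply lintegral_mono
  intro t
  -- left side bound
  have hL : sphMeasure n {x | (t < wrep n u x) ≠ (t < wrep n v x)}
      ≤ (distrib n u t - distrib n v t) + (distrib n v t - distrib n u t) := by
    have hs : {x : Sph n | (t < wrep n u x) ≠ (t < wrep n v x)}
        ⊆ {x | t < wrep n u x ∧ ¬ t < wrep n v x}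
          ∪ {x | t < wrep n v x ∧ ¬ t < wrep n u x} := by
      intro x hx
      simp only [mem_setOf_eq, ne_eq, eq_iff_iff, not_iff] at hx
      simp only [mem_union, mem_setOf_eq]
      by_cases h1 : t < wrep n u x
      · exact Or.inl ⟨h1, fun h2 => (hx.mpr h2) h1⟩
      · exact Or.inr ⟨hx.mp h1, h1⟩
    calc sphMeasure n {x | (t < wrep n u x) ≠ (t < wrep n v x)}
        ≤ sphMeasure n ({x | t < wrep n u x ∧ ¬ t < wrep n v x}
            ∪ {x | t < wrep n v x ∧ ¬ t < wrep n u x}) := measure_mono hs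
      _ ≤ sphMeasure n {x | t < wrep n u x ∧ ¬ t < wrep n v x}
          + sphMeasure n {x | t < wrep n v x ∧ ¬ t < wrep n u x} := measure_union_le _ _
      _ ≤ (distrib n u t - distrib n v t) + (distrib n v t - distrib n u t) :=
          add_le_add (onesided hn hu hv t) (onesided hn hv hu t)
  -- right side bound
  have hmu : distrib n u t = sphMeasure n {x | t < hu.mk u x} := distrib_congr hu t
  have hmv : distrib n v t = sphMeasure n {x | t < hv.mk v x} := distrib_congr hv t
  have hR1 : distrib n u t - distrib n v t
      ≤ sphMeasure n {x | (t < hu.mk u x) ≠ (t < hv.mk v x)} := by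
    rw [tsub_le_iff_right, hmu, hmv]
    have hsub : {x : Sph n | t < hu.mk u x}
        ⊆ {x | (t < hu.mk u x) ≠ (t < hv.mk v x)} ∪ {x | t < hv.mk v x} := by
      intro x hx
      simp only [mem_union, mem_setOf_eq, ne_eq, eq_iff_iff] at hx ⊢
      by_cases h2 : t < hv.mk v x
      · exact Or.inr h2
      · exact Or.inl (fun hiff => h2 (hiff.mp hx))
    calc sphMeasure n {x | t < hu.mk u x} ≤ _ := measure_mono hsub
      _ ≤ _ := measure_union_le _ _
  have hR2 : distrib n v t - distrib n u t
      ≤ sphMeasure n {x | (t < hu.mk u x) ≠ (t < hv.mk v x)} := by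
    rw [tsub_le_iff_right, hmv, hmu]
    have hsub : {x : Sph n | t < hv.mk v x}
        ⊆ {x | (t < hu.mk u x) ≠ (t < hv.mk v x)} ∪ {x | t < hu.mk u x} := by
      intro x hx
      simp only [mem_union, mem_setOf_eq, ne_eq, eq_iff_iff] at hx ⊢
      by_cases h2 : t < hu.mk u x
      · exact Or.inr h2
      · exact Or.inl (fun hiff => h2 (hiff.mpr hx))
    calc sphMeasure n {x | t < hv.mk v x} ≤ _ := measure_mono hsub
      _ ≤ _ := measure_union_le _ _
  rcases le_total (distrib n u t) (distrib n v t) with h | h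
  · calc sphMeasure n {x | (t < wrep n u x) ≠ (t < wrep n v x)} ≤ _ := hL
      _ = distrib n v t - distrib n u t := by rw [tsub_eq_zero_of_le h, zero_add]
      _ ≤ _ := hR2
  · calc sphMeasure n {x | (t < wrep n u x) ≠ (t < wrep n v x)} ≤ _ := hL
      _ = distrib n u t - distrib n v t := by rw [tsub_eq_zero_of_le h, add_zero]
      _ ≤ _ := hR1

end SymmznAux

open SymmznAux in
/-- `L¹`-contraction of spherical symmetrization:
`∫ |u* − v*| dσ ≤ ∫ |u − v| dσ`. -/
theorem symmzn_L1_contraction (n : ℕ) (hn : 2 ≤ n) (u v : Sph n → ℝ)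
    (hu : Integrable u (sphMeasure n)) (hv : Integrable v (sphMeasure n)) :
    ∫ x, |symmzn n u x - symmzn n v x| ∂(sphMeasure n)
      ≤ ∫ x, |u x - v x| ∂(sphMeasure n) := by
  have hn1 : 1 ≤ n := le_trans (by norm_num) hn
  have hum : AEMeasurable u (sphMeasure n) := hu.aemeasurable
  have hvm : AEMeasurable v (sphMeasure n) := hv.aemeasurable
  have hf : Measurable (wrep n u) := measurable_wrep hn1 hum
  have hg : Measurable (wrep n v) := measurable_wrep hn1 hvm
  -- congruences
  have hcongrL : ∫⁻ x, ENNReal.ofReal |wrep n u x - wrep n v x| ∂(sphMeasure n)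
      = ∫⁻ x, ENNReal.ofReal |symmzn n u x - symmzn n v x| ∂(sphMeasure n) := by
    apply lintegral_congr_ae
    filter_upwards [wrep_ae_eq hn1 u, wrep_ae_eq hn1 v] with x h1 h2
    rw [h1, h2]
  have hcongrR : ∫⁻ x, ENNReal.ofReal |hum.mk u x - hvm.mk v x| ∂(sphMeasure n)
      = ∫⁻ x, ENNReal.ofReal |u x - v x| ∂(sphMeasure n) := by
    apply lintegral_congr_ae
    filter_upwards [hum.ae_eq_mk, hvm.ae_eq_mk] with x h1 h2
    rw [h1, h2]
  have key : ∫⁻ x, ENNReal.ofReal |symmzn n u x - symmzn n v x| ∂(sphMeasure n)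
      ≤ ∫⁻ x, ENNReal.ofReal |u x - v x| ∂(sphMeasure n) := by
    rw [← hcongrL, ← hcongrR]
    exact main_lintegral hn1 hum hvm
  -- finiteness of the right-hand side
  have hfin : ∫⁻ x, ENNReal.ofReal |u x - v x| ∂(sphMeasure n) ≠ ⊤ := by
    have hint : Integrable (fun x => u x - v x) (sphMeasure n) := hu.sub hv
    have h2 := hint.2
    rw [HasFiniteIntegral] at h2
    have : ∀ x, ‖u x - v x‖ₑ = ENNReal.ofReal |u x - v x| := fun x =>
      Real.enorm_eq_ofReal_abs _
    simp only [this] at h2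
    exact h2.ne
  -- convert integrals
  have hfg_meas : AEStronglyMeasurable (fun x => |symmzn n u x - symmzn n v x|)
      (sphMeasure n) := by
    apply AEStronglyMeasurable.congr ((hf.sub hg).abs.aestronglyMeasurable)
    filter_upwards [wrep_ae_eq hn1 u, wrep_ae_eq hn1 v] with x h1 h2
    rw [Pi.sub_apply, h1, h2]
  have huv_meas : AEStronglyMeasurable (fun x => |u x - v x|) (sphMeasure n) := by
    apply AEStronglyMeasurable.congr (hu.sub hv).1.norm
    filter_upwards with x
    rw [Real.norm_eq_abs]
    simp
  rw [integral_eq_lintegral_of_nonneg_ae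
      (Filter.Eventually.of_forall fun x => abs_nonneg _) hfg_meas,
    integral_eq_lintegral_of_nonneg_ae
      (Filter.Eventually.of_forall fun x => abs_nonneg _) huv_meas]
  exact ENNReal.toReal_mono hfin key
end
end

section
/- Let C > 0 and let μ : [0, ∞) → [0, ∞) be a nonincreasing function whose (almost-everywhere defined) derivative satisfies μ′(t) ≤ −C μ(t) for almost every t > 0. Then μ(t) ≤ μ(0) e^{−Ct} for every t ≥ 0. -/
open MeasureTheory Set Filter Topology

/-- Gronwall-type lemma: if `μ` is nonincreasing and nonnegative on `[0, ∞)` and its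
almost-everywhere defined derivative satisfies `μ′(t) ≤ −C μ(t)` for a.e. `t > 0`,
then `μ(t) ≤ μ(0) e^{−Ct}` for all `t ≥ 0`. -/
theorem exp_decay_of_deriv_le (C : ℝ) (hC : 0 < C) (μ : ℝ → ℝ)
    (hmono : AntitoneOn μ (Set.Ici 0)) (hnonneg : ∀ t, 0 ≤ t → 0 ≤ μ t)
    (hderiv : ∀ᵐ t ∂(volume.restrict (Set.Ioi (0 : ℝ))),
      ∀ d : ℝ, HasDerivAt μ d t → d ≤ -C * μ t) :
    ∀ t, 0 ≤ t → μ t ≤ μ 0 * Real.exp (-C * t) := by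
  -- the monotone extension `f = -μ ∘ max · 0`
  set f : ℝ → ℝ := fun x => -μ (max x 0) with hf
  have hfm : Monotone f := by
    intro x y hxy
    simp only [hf, neg_le_neg_iff]
    exact hmono (le_max_right x 0) (le_max_right y 0) (max_le_max hxy le_rfl)
  -- key step : for 0 ≤ s < t, μ t * (1 + C (t - s)) ≤ μ s
  have key : ∀ s t : ℝ, 0 ≤ s → s < t → μ t * (1 + C * (t - s)) ≤ μ s := by
    intro s t hs hst
    have ht0 : (0:ℝ) ≤ t := hs.trans hst.le
    set K := C * μ t with hK
    have hK0 : 0 ≤ K := mul_nonneg hC.le (hnonneg t ht0)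
    set m := hfm.stieltjesFunction.measure with hm
    set g := m.rnDeriv volume with hg
    have hsub : Ioc s t ⊆ Ioi (0:ℝ) := fun x hx => lt_of_le_of_lt hs hx.1
    have A : ∀ᵐ x ∂(volume.restrict (Ioc s t)), ENNReal.ofReal K ≤ g x := by
      have h1 : ∀ᵐ x ∂(volume.restrict (Ioc s t)), ∀ d, HasDerivAt μ d x → d ≤ -C * μ x :=
        ae_restrict_of_ae_restrict_of_subset hsub hderiv
      have h2 : ∀ᵐ x ∂(volume.restrict (Ioc s t)), HasDerivAt f (g x).toReal x :=
        ae_restrict_of_ae hfm.ae_hasDerivAt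
      have h3 : ∀ᵐ x ∂(volume.restrict (Ioc s t)), g x < ⊤ :=
        ae_restrict_of_ae (Measure.rnDeriv_lt_top m volume)
      filter_upwards [h1, h2, h3, ae_restrict_mem measurableSet_Ioc] with x hx1 hx2 hx3 hx4
      have hx0 : 0 < x := hs.trans_lt hx4.1
      have hev : (fun y => -μ y) =ᶠ[nhds x] f := by
        filter_upwards [Ioi_mem_nhds hx0] with y hy
        simp only [hf]
        rw [max_eq_left (le_of_lt (Set.mem_Ioi.mp hy))]
      have hd1 : HasDerivAt (fun y => -μ y) (g x).toReal x :=
        hx2.congr_of_eventuallyEq hev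
      have hd2 : HasDerivAt μ (-(g x).toReal) x := by
        have := hd1.neg
        have h' : HasDerivAt (fun y => -(-μ y)) (-(g x).toReal) x := hd1.neg
        simpa using h'
      have hle : -(g x).toReal ≤ -C * μ x := hx1 _ hd2
      have hmut : μ t ≤ μ x := hmono hx0.le ht0 hx4.2
      have hKle : K ≤ (g x).toReal := by
        have h5 : C * μ t ≤ C * μ x := mul_le_mul_of_nonneg_left hmut hC.le
        rw [hK]; linarith
      exact ENNReal.ofReal_le_of_le_toReal hKle
    have B : ∀ t' ∈ Ioo s t, K * (t' - s) ≤ μ s - μ t := by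
      intro t' ht'
      have hsub' : Ioc s t' ⊆ Ioc s t := Ioc_subset_Ioc_right ht'.2.le
      have A' : ∀ᵐ x ∂(volume.restrict (Ioc s t')), ENNReal.ofReal K ≤ g x :=
        ae_restrict_of_ae_restrict_of_subset hsub' A
      have l1 : ENNReal.ofReal K * volume (Ioc s t') ≤ ∫⁻ x in Ioc s t', g x := by
        rw [← setLIntegral_const]
        exact lintegral_mono_ae A'
      have l2 : ∫⁻ x in Ioc s t', g x ≤ m (Ioc s t') := Measure.setLIntegral_rnDeriv_le _
      have l3 : m (Ioc s t')
          = ENNReal.ofReal (hfm.stieltjesFunction t' - hfm.stieltjesFunction s) :=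
        hfm.stieltjesFunction.measure_Ioc _ _
      have hF : hfm.stieltjesFunction s ≤ hfm.stieltjesFunction t' :=
        hfm.stieltjesFunction.mono ht'.1.le
      have hreal : K * (t' - s) ≤ hfm.stieltjesFunction t' - hfm.stieltjesFunction s := by
        have h6 := le_trans l1 (le_trans l2 l3.le)
        rw [Real.volume_Ioc, ← ENNReal.ofReal_mul hK0] at h6
        exact (ENNReal.ofReal_le_ofReal_iff (by linarith)).mp h6
      have hFs : f s ≤ hfm.stieltjesFunction s := by
        rw [hfm.stieltjesFunction_eq]; exact hfm.le_rightLim le_rfl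
      have hFt : hfm.stieltjesFunction t' ≤ f t := by
        rw [hfm.stieltjesFunction_eq]; exact hfm.rightLim_le ht'.2
      have hfs : f s = -μ s := by simp only [hf]; rw [max_eq_left hs]
      have hft : f t = -μ t := by simp only [hf]; rw [max_eq_left ht0]
      rw [hfs] at hFs; rw [hft] at hFt
      linarith
    have hlim : Tendsto (fun t' => K * (t' - s)) (nhdsWithin t (Iio t)) (nhds (K * (t - s))) :=
      ((continuous_const.mul (continuous_id.sub continuous_const)).tendsto t).mono_left
        nhdsWithin_le_nhds
    have hfinal : K * (t - s) ≤ μ s - μ t :=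
      le_of_tendsto hlim (eventually_of_mem (Ioo_mem_nhdsLT_of_mem ⟨hst, le_rfl⟩) B)
    rw [hK] at hfinal
    nlinarith [hfinal]
  -- iterate the key step
  have iter : ∀ h : ℝ, 0 ≤ h → ∀ k : ℕ, μ (k * h) * (1 + C * h) ^ k ≤ μ 0 := by
    intro h hh k
    induction k with
    | zero => simp
    | succ k ih =>
      rcases eq_or_lt_of_le hh with h0 | h0
      · rw [← h0] at ih ⊢
        simp
      · have hk : (0:ℝ) ≤ (k : ℝ) * h := mul_nonneg (Nat.cast_nonneg k) hh
        have hlt : (k:ℝ) * h < ((k:ℝ)+1) * h := by nlinarith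
        have hstep := key ((k:ℝ)*h) (((k:ℝ)+1)*h) hk hlt
        have hd : ((k:ℝ)+1)*h - (k:ℝ)*h = h := by ring
        rw [hd] at hstep
        have hpos : (0:ℝ) ≤ 1 + C * h := by nlinarith
        calc μ ((↑(k+1) : ℝ) * h) * (1 + C*h) ^ (k+1)
            = (μ (((k:ℝ)+1)*h) * (1 + C*h)) * (1 + C*h) ^ k := by push_cast; ring
          _ ≤ μ ((k:ℝ)*h) * (1 + C*h) ^ k :=
              mul_le_mul_of_nonneg_right hstep (pow_nonneg hpos k)
          _ ≤ μ 0 := ih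
   -- pass to the limit
  intro t ht
  rcases eq_or_lt_of_le ht with h0 | ht0
  · rw [← h0]; simp
  · have hn : ∀ n : ℕ, 1 ≤ n → μ t * (1 + C * t / (n:ℝ)) ^ n ≤ μ 0 := by
      intro n hn1
      have hnpos : (0:ℝ) < n := by exact_mod_cast hn1
      have h7 := iter (t / n) (div_nonneg ht (le_of_lt hnpos)) n
      have e1 : (n:ℝ) * (t/n) = t := by field_simp
      have e2 : C * (t/n) = C * t / n := by ring
      rw [e1, e2] at h7
      exact h7
    have hlim : Tendsto (fun n : ℕ => μ t * (1 + C*t/(n:ℝ))^n) atTop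
        (nhds (μ t * Real.exp (C*t))) :=
      (Real.tendsto_one_add_div_pow_exp (C*t)).const_mul (μ t)
    have hfin : μ t * Real.exp (C*t) ≤ μ 0 :=
      le_of_tendsto hlim (eventually_atTop.mpr ⟨1, hn⟩)
    have hE : 0 < Real.exp (C*t) := Real.exp_pos _
    rw [neg_mul, Real.exp_neg, ← div_eq_mul_inv, le_div_iff₀ hE]
    exact hfin
end
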